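/- arXiv:1008.1837 — 2 statements merged into one kernel-verified Lean document; each statement's English description precedes it below -/
import Mathlib

section
/- Let γ be a coloring of K_n^{6,4} (the complete multigraph on n vertices with 6 copies of each edge and 4 self-loops per vertex) with Z²-rank k. The set function f(G') = n' + rk_{Z²}(G',γ) − c' on edge-subsets G' (with n' vertices spanned, c' connected components) satisfies: adding any single colored edge ij not in G' changes f by exactly 0 or 1. -/
open Finset

section Defs
variable {V E : Type} [Fintype V] [DecidableEq V] [Fintype E] [DecidableEq E]

/-- Signed incidence of edge `e` at vertex `v`. -/
def incid (th hd : E → V) (e : E) (v : V) : ℤ :=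
  (if hd e = v then 1 else 0) - (if th e = v then 1 else 0)

/-- `x : E → ℤ` is a cycle (1-chain with zero boundary) supported on the edge set `S`. -/
def IsCycle (th hd : E → V) (S : Finset E) (x : E → ℤ) : Prop :=
  (∀ e ∉ S, x e = 0) ∧ ∀ v : V, ∑ e, x e * incid th hd e v = 0

/-- Signed color-sum of a chain. -/
def rho (γ : E → ℤ × ℤ) (x : E → ℤ) : ℤ × ℤ := ∑ e, x e • γ e

def q2 (p : ℤ × ℤ) : ℚ × ℚ := ((p.1 : ℚ), (p.2 : ℚ))

/-- The ℤ²-rank of the colored subgraph with edge set `S`. -/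
noncomputable def zrank (th hd : E → V) (γ : E → ℤ × ℤ) (S : Finset E) : ℕ :=
  Module.finrank ℚ (Submodule.span ℚ (q2 '' (rho γ '' {x | IsCycle th hd S x})))

/-- Adjacency via an edge in `S`. -/
def adjS (th hd : E → V) (S : Finset E) (u v : V) : Prop :=
  ∃ e ∈ S, (th e = u ∧ hd e = v) ∨ (th e = v ∧ hd e = u)

/-- Vertices spanned by the edge set `S`. -/
def verts (th hd : E → V) (S : Finset E) : Finset V := S.image th ∪ S.image hd

/-- Number of connected components of the subgraph induced by the edge set `S`
(on the vertices it spans). -/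
noncomputable def ncomp (th hd : E → V) (S : Finset E) : ℕ :=
  Nat.card (Quotient (Relation.EqvGen.setoid
    (fun a b : {v : V // v ∈ verts th hd S} => adjS th hd S a.1 b.1)))

/-- The subgraph with edge set `S` is connected and spans all vertices. -/
def Conn (th hd : E → V) (S : Finset E) : Prop :=
  ∀ u v : V, Relation.EqvGen (adjS th hd S) u v

/-- The function `f(G') = n' + rk_{ℤ²}(G') − c'`. -/
noncomputable def fZ (th hd : E → V) (γ : E → ℤ × ℤ) (S : Finset E) : ℤ :=
  ((verts th hd S).card : ℤ) + (zrank th hd γ S : ℤ) - (ncomp th hd S : ℤ)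

end Defs

/-- Edge set of the complete multigraph `K_n^{6,4}`. -/
def KE (n : ℕ) : Type :=
  ({p : Fin n × Fin n // p.1 < p.2} × Fin 6) ⊕ (Fin n × Fin 4)

instance (n : ℕ) : Fintype (KE n) := by unfold KE; infer_instance
instance (n : ℕ) : DecidableEq (KE n) := by unfold KE; infer_instance

def Kt (n : ℕ) : KE n → Fin n := Sum.elim (fun q => q.1.1.1) (fun q => q.1)
def Kh (n : ℕ) : KE n → Fin n := Sum.elim (fun q => q.1.1.2) (fun q => q.1)

/-!
Let `c(S)` be the number of components of the spanning subgraph `(V, S)`, isolated vertices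
included. Then `n' - c' = |V| - c(S)`, so `f(S) = |V| + rk(S) - c(S)`. Add an edge `e = uv`.
If `u` and `v` lie in different components of `S`, then `c` drops by one and the rank does not
change: the component of `u` is a cut that `e` alone crosses, so every cycle vanishes on `e`.
If `u` and `v` are already connected, then `c` does not change and the rank grows by at most
one: subtracting a suitable multiple of one fixed cycle through `e` from any cycle gives a cycle
avoiding `e`.
-/

namespace Relation

variable {α : Type*}

theorem EqvGen.eq_or_subtype {s : Finset α} {r : α → α → Prop}
    (hr : ∀ a b, r a b → a ∈ s ∧ b ∈ s) {a b : α} (h : EqvGen r a b) :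
    a = b ∨ ∃ (ha : a ∈ s) (hb : b ∈ s),
      EqvGen (fun x y : {x // x ∈ s} => r x y) ⟨a, ha⟩ ⟨b, hb⟩ := by
  induction h with
  | rel a b hab => exact .inr ⟨(hr a b hab).1, (hr a b hab).2, .rel _ _ hab⟩
  | refl => exact .inl rfl
  | symm a b _ ih =>
    rcases ih with rfl | ⟨ha, hb, h⟩
    · exact .inl rfl
    · exact .inr ⟨hb, ha, .symm _ _ h⟩
  | trans a b c _ _ ih₁ ih₂ =>
    rcases ih₁ with rfl | ⟨ha, hb, h₁⟩
    · exact ih₂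
    rcases ih₂ with rfl | ⟨_, hc, h₂⟩
    · exact .inr ⟨ha, hb, h₁⟩
    · exact .inr ⟨ha, hc, .trans _ _ _ h₁ h₂⟩

theorem EqvGen.setoid_subtype_eq_comap {s : Finset α} {r : α → α → Prop}
    (hr : ∀ a b, r a b → a ∈ s ∧ b ∈ s) :
    EqvGen.setoid (fun x y : {x // x ∈ s} => r x y) = (EqvGen.setoid r).comap Subtype.val := by
  refine le_antisymm (Setoid.eqvGen_le fun x y h => EqvGen.rel _ _ h) fun x y h => ?_
  rcases EqvGen.eq_or_subtype hr h with hxy | ⟨_, _, h⟩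
  · exact Subtype.ext hxy ▸ EqvGen.refl _
  · exact h

theorem card_quotient_eqvGen_subtype_add_card_compl [Fintype α] [DecidableEq α] {s : Finset α}
    {r : α → α → Prop} (hr : ∀ a b, r a b → a ∈ s ∧ b ∈ s) :
    Nat.card (Quotient (EqvGen.setoid (fun x y : {x // x ∈ s} => r x y))) + sᶜ.card =
      Nat.card (Quotient (EqvGen.setoid r)) := by
  classical
  let mk : α → Quotient (EqvGen.setoid r) := Quotient.mk _
  have hsingle : ∀ a b, a ∉ s → mk a = mk b → a = b := fun a b ha hab =>
    (EqvGen.eq_or_subtype hr (Quotient.exact hab)).resolve_right fun ⟨ha', _⟩ => ha ha'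
  have hsub : Nat.card (Quotient (EqvGen.setoid (fun x y : {x // x ∈ s} => r x y))) =
      (s.image mk).card := by
    rw [EqvGen.setoid_subtype_eq_comap hr, Nat.card_congr (Setoid.comapQuotientEquiv _ _),
      Nat.card_coe_set_eq, ← Set.ncard_coe_finset, Finset.coe_image, Set.range_comp,
      Subtype.range_coe]
  have hdisj : Disjoint (s.image mk) (sᶜ.image mk) := by
    refine Finset.disjoint_left.2 fun q hq hq' => ?_
    obtain ⟨a, ha, rfl⟩ := Finset.mem_image.1 hq
    obtain ⟨b, hb, hba⟩ := Finset.mem_image.1 hq'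
    exact Finset.mem_compl.1 hb (hsingle b a (Finset.mem_compl.1 hb) hba ▸ ha)
  have hinj : Set.InjOn mk (sᶜ : Finset α) := fun a ha b _ hab =>
    hsingle a b (Finset.mem_compl.1 ha) hab
  have hsurj : Finset.univ.image mk = Finset.univ :=
    Finset.image_univ_of_surjective Quotient.mk_surjective
  rw [hsub, ← Finset.card_image_of_injOn hinj, ← Finset.card_union_of_disjoint hdisj,
    ← Finset.image_union, Finset.union_compl, hsurj, Finset.card_univ, Nat.card_eq_fintype_card]

theorem card_quotient_eqvGen_add_edge [Finite α] {r r' : α → α → Prop} {u v : α}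
    (hle : r ≤ r') (huv : r' u v)
    (hr' : ∀ a b, r' a b → r a b ∨ (a = u ∧ b = v) ∨ (a = v ∧ b = u))
    (hnot : ¬ EqvGen r u v) :
    Nat.card (Quotient (EqvGen.setoid r')) + 1 = Nat.card (Quotient (EqvGen.setoid r)) := by
  classical
  let mk : α → Quotient (EqvGen.setoid r) := Quotient.mk _
  let mk' : α → Quotient (EqvGen.setoid r') := Quotient.mk _
  -- `φ` is `mk` with the class of `v` merged into that of `u`
  let φ : α → Quotient (EqvGen.setoid r) := fun a => if EqvGen r a v then mk u else mk a
  have hφ_mk : ∀ a b, EqvGen r a b → φ a = φ b := fun a b h => by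
    have hv : EqvGen r a v ↔ EqvGen r b v :=
      ⟨(EqvGen.trans _ _ _ (.symm _ _ h) ·), (EqvGen.trans _ _ _ h ·)⟩
    have hab : mk a = mk b := Quotient.sound h
    simp only [φ, hv, hab]
  have hφ_uv : φ u = φ v := by simp [φ, EqvGen.refl]
  have hker : Setoid.ker φ = EqvGen.setoid r' := by
    refine le_antisymm (fun a b hab => ?_) (Setoid.eqvGen_le fun a b hab => ?_)
    · let ψ : Quotient (EqvGen.setoid r) → Quotient (EqvGen.setoid r') :=
        Quotient.lift mk' fun a b h => Quotient.sound (EqvGen.mono hle _ _ h)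
      have hψ : ∀ a, ψ (φ a) = mk' a := fun a => by
        by_cases ha : EqvGen r a v
        · simp only [φ, ha, if_true]
          have huv' : mk' u = mk' v := Quotient.sound (EqvGen.rel _ _ huv)
          have hav : mk' a = mk' v := Quotient.sound (EqvGen.mono hle _ _ ha)
          exact huv'.trans hav.symm
        · simp only [φ, ha, if_false]; rfl
      exact Quotient.exact ((hψ a).symm.trans ((congrArg ψ hab).trans (hψ b)))
    · rcases hr' a b hab with h | ⟨rfl, rfl⟩ | ⟨rfl, rfl⟩
      · exact hφ_mk a b (.rel _ _ h)
      · exact hφ_uv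
      · exact hφ_uv.symm
  have hrange : Set.range φ = {mk v}ᶜ := by
    ext q
    refine ⟨?_, fun hq => ⟨q.out, ?_⟩⟩
    · rintro ⟨a, rfl⟩ (h : φ a = mk v)
      by_cases ha : EqvGen r a v
      · simp only [φ, ha, if_true] at h
        exact hnot (Quotient.exact h)
      · simp only [φ, ha, if_false] at h
        exact ha (Quotient.exact h)
    · have hq' : ¬ EqvGen r q.out v := fun h => hq (by
        rw [Set.mem_singleton_iff, ← Quotient.out_eq q]; exact Quotient.sound h)
      simp only [φ, hq', if_false, mk, Quotient.out_eq]
  rw [← hker, Nat.card_congr (Setoid.quotientKerEquivRange φ), hrange, Nat.card_coe_set_eq,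
    ← Set.ncard_singleton (mk v), Set.ncard_compl_add_ncard]

end Relation

section Components

variable {V E : Type} {th hd : E → V}

/-- Unlike `ncomp`, this also counts the vertices not spanned by `S`, as singleton components. -/
noncomputable def numComponents (th hd : E → V) (S : Finset E) : ℕ :=
  Nat.card (Quotient (Relation.EqvGen.setoid (adjS th hd S)))

lemma adjS_mem_verts [DecidableEq V] {S : Finset E} {a b : V} (h : adjS th hd S a b) :
    a ∈ verts th hd S ∧ b ∈ verts th hd S := by
  obtain ⟨f, hf, ⟨rfl, rfl⟩ | ⟨rfl, rfl⟩⟩ := h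
  · exact ⟨Finset.mem_union_left _ (Finset.mem_image_of_mem th hf),
      Finset.mem_union_right _ (Finset.mem_image_of_mem hd hf)⟩
  · exact ⟨Finset.mem_union_right _ (Finset.mem_image_of_mem hd hf),
      Finset.mem_union_left _ (Finset.mem_image_of_mem th hf)⟩

lemma adjS_mono {S T : Finset E} (hST : S ⊆ T) : adjS th hd S ≤ adjS th hd T :=
  fun _ _ ⟨f, hf, h⟩ => ⟨f, hST hf, h⟩

lemma adjS_insert_self [DecidableEq E] (S : Finset E) (e : E) :
    adjS th hd (insert e S) (th e) (hd e) :=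
  ⟨e, Finset.mem_insert_self e S, .inl ⟨rfl, rfl⟩⟩

lemma adjS_insert [DecidableEq E] {S : Finset E} {e : E} {a b : V}
    (h : adjS th hd (insert e S) a b) :
    adjS th hd S a b ∨ (a = th e ∧ b = hd e) ∨ (a = hd e ∧ b = th e) := by
  obtain ⟨f, hf, hab⟩ := h
  rcases Finset.mem_insert.1 hf with rfl | hf
  · rcases hab with ⟨rfl, rfl⟩ | ⟨rfl, rfl⟩ <;> tauto
  · exact .inl ⟨f, hf, hab⟩

lemma ncomp_add_card_compl_verts [Fintype V] [DecidableEq V] (th hd : E → V) (S : Finset E) :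
    ncomp th hd S + (verts th hd S)ᶜ.card = numComponents th hd S :=
  Relation.card_quotient_eqvGen_subtype_add_card_compl fun _ _ => adjS_mem_verts

lemma numComponents_insert_of_eqvGen [DecidableEq E] {S : Finset E} {e : E}
    (h : Relation.EqvGen (adjS th hd S) (th e) (hd e)) :
    numComponents th hd (insert e S) = numComponents th hd S := by
  suffices Relation.EqvGen.setoid (adjS th hd (insert e S)) =
      Relation.EqvGen.setoid (adjS th hd S) by rw [numComponents, this, numComponents]
  refine le_antisymm (Setoid.eqvGen_le fun a b hab => ?_)
    (Setoid.eqvGen_mono (adjS_mono (Finset.subset_insert e S)))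
  rcases adjS_insert hab with hab | ⟨rfl, rfl⟩ | ⟨rfl, rfl⟩
  · exact .rel _ _ hab
  · exact h
  · exact .symm _ _ h

lemma numComponents_insert_of_not_eqvGen [Finite V] [DecidableEq E] {S : Finset E} {e : E}
    (h : ¬ Relation.EqvGen (adjS th hd S) (th e) (hd e)) :
    numComponents th hd (insert e S) + 1 = numComponents th hd S :=
  Relation.card_quotient_eqvGen_add_edge (adjS_mono (Finset.subset_insert e S))
    (adjS_insert_self S e) (fun _ _ => adjS_insert) h

end Components

section Cycles

variable {V E : Type} [DecidableEq V] [Fintype E] {th hd : E → V} {S T : Finset E} {x y : E → ℤ}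

lemma IsCycle.mono (hST : S ⊆ T) (hx : IsCycle th hd S x) : IsCycle th hd T x :=
  ⟨fun f hf => hx.1 f fun hfS => hf (hST hfS), hx.2⟩

lemma IsCycle.sum_mul_cut_eq_zero (hx : IsCycle th hd S x) (A : Finset V) :
    ∑ f, x f * ((if hd f ∈ A then 1 else 0) - (if th f ∈ A then 1 else 0)) = 0 := by
  calc ∑ f, x f * ((if hd f ∈ A then 1 else 0) - (if th f ∈ A then 1 else 0))
      = ∑ v ∈ A, ∑ f, x f * incid th hd f v := by
        rw [Finset.sum_comm]
        refine Finset.sum_congr rfl fun f _ => ?_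
        simp only [incid, ← Finset.mul_sum, Finset.sum_sub_distrib, Finset.sum_ite_eq]
    _ = 0 := Finset.sum_eq_zero fun v _ => hx.2 v

lemma IsCycle.apply_eq_zero_of_cut [DecidableEq E] {e : E}
    (hx : IsCycle th hd (insert e S) x) (A : Finset V) (hS : ∀ f ∈ S, (th f ∈ A ↔ hd f ∈ A))
    (he : ¬ (th e ∈ A ↔ hd e ∈ A)) : x e = 0 := by
  have hflow := hx.sum_mul_cut_eq_zero A
  rw [Finset.sum_eq_single e (fun f _ hfe => ?_) (absurd (Finset.mem_univ e))] at hflow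
  · refine (mul_eq_zero.1 hflow).resolve_right ?_
    by_cases hth : th e ∈ A <;> by_cases hhd : hd e ∈ A <;> simp_all
  · by_cases hfS : f ∈ S
    · simp [hS f hfS]
    · rw [hx.1 f (by simp [hfe, hfS]), zero_mul]

noncomputable def cycleSpan (th hd : E → V) (γ : E → ℤ × ℤ) (S : Finset E) :
    Submodule ℚ (ℚ × ℚ) :=
  Submodule.span ℚ (q2 '' (rho γ '' {x | IsCycle th hd S x}))

lemma zrank_eq_finrank_cycleSpan (th hd : E → V) (γ : E → ℤ × ℤ) (S : Finset E) :
    zrank th hd γ S = Module.finrank ℚ (cycleSpan th hd γ S) := rfl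

lemma zrank_mono (γ : E → ℤ × ℤ) (hST : S ⊆ T) :
    zrank th hd γ S ≤ zrank th hd γ T :=
  Submodule.finrank_mono (Submodule.span_mono
    (Set.image_mono (Set.image_mono fun _ hx => IsCycle.mono hST hx)))

lemma zrank_insert_of_forall_isCycle [DecidableEq E] (γ : E → ℤ × ℤ) {e : E}
    (h : ∀ x, IsCycle th hd (insert e S) x → x e = 0) :
    zrank th hd γ (insert e S) = zrank th hd γ S := by
  have hcycles : {x | IsCycle th hd (insert e S) x} = {x | IsCycle th hd S x} := by
    ext x
    refine ⟨fun hx => ⟨fun f hf => ?_, hx.2⟩, fun hx => hx.mono (Finset.subset_insert e S)⟩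
    by_cases hfe : f = e
    · exact hfe ▸ h x hx
    · exact hx.1 f (by simp [hfe, hf])
  rw [zrank, hcycles, zrank]

lemma zrank_insert_of_not_eqvGen [Fintype V] [DecidableEq E] (γ : E → ℤ × ℤ) {e : E}
    (h : ¬ Relation.EqvGen (adjS th hd S) (th e) (hd e)) :
    zrank th hd γ (insert e S) = zrank th hd γ S := by
  classical
  -- the component of `th e` is a cut crossed by `e` and by no edge of `S`
  let A := Finset.univ.filter (Relation.EqvGen (adjS th hd S) (th e))
  have hS : ∀ f ∈ S, (th f ∈ A ↔ hd f ∈ A) := fun f hf => by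
    have hf : Relation.EqvGen (adjS th hd S) (th f) (hd f) := .rel _ _ ⟨f, hf, .inl ⟨rfl, rfl⟩⟩
    simp only [A, Finset.mem_filter, Finset.mem_univ, true_and]
    exact ⟨(.trans _ _ _ · hf), (.trans _ _ _ · (.symm _ _ hf))⟩
  have he : ¬ (th e ∈ A ↔ hd e ∈ A) := fun hiff =>
    h (by simpa [A] using hiff.1 (by simpa [A] using Relation.EqvGen.refl (th e)))
  exact zrank_insert_of_forall_isCycle γ fun _ hx => hx.apply_eq_zero_of_cut A hS he

lemma IsCycle.elim_insert [DecidableEq E] {e : E} (hx : IsCycle th hd (insert e S) x)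
    (hy : IsCycle th hd (insert e S) y) :
    IsCycle th hd S (fun f => y e * x f - x e * y f) := by
  refine ⟨fun f hf => ?_, fun v => ?_⟩
  · show y e * x f - x e * y f = 0
    by_cases hfe : f = e
    · subst hfe; ring
    · rw [hx.1 f (by simp [hfe, hf]), hy.1 f (by simp [hfe, hf])]; ring
  · calc ∑ f, (y e * x f - x e * y f) * incid th hd f v
        = y e * ∑ f, x f * incid th hd f v - x e * ∑ f, y f * incid th hd f v := by
          rw [Finset.mul_sum, Finset.mul_sum, ← Finset.sum_sub_distrib]
          exact Finset.sum_congr rfl fun f _ => by ring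
      _ = 0 := by rw [hx.2 v, hy.2 v]; ring

lemma q2_rho_mul_sub_mul (γ : E → ℤ × ℤ) (a b : ℤ) (x y : E → ℤ) :
    q2 (rho γ (fun f => a * x f - b * y f)) =
      (a : ℚ) • q2 (rho γ x) - (b : ℚ) • q2 (rho γ y) := by
  simp only [rho, q2, mul_smul, sub_smul, Finset.sum_sub_distrib, ← Finset.smul_sum]
  ext <;> simp

lemma zrank_insert_le [DecidableEq E] (γ : E → ℤ × ℤ) (e : E) :
    zrank th hd γ (insert e S) ≤ zrank th hd γ S + 1 := by
  by_cases hex : ∃ y, IsCycle th hd (insert e S) y ∧ y e ≠ 0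
  · obtain ⟨y, hy, hye⟩ := hex
    have hle : cycleSpan th hd γ (insert e S) ≤ cycleSpan th hd γ S ⊔ ℚ ∙ q2 (rho γ y) := by
      rw [cycleSpan, Submodule.span_le]
      rintro _ ⟨_, ⟨x, hx, rfl⟩, rfl⟩
      have hcomb : (y e : ℚ) • q2 (rho γ x) =
          q2 (rho γ (fun f => y e * x f - x e * y f)) + (x e : ℚ) • q2 (rho γ y) := by
        rw [q2_rho_mul_sub_mul, sub_add_cancel]
      rw [SetLike.mem_coe, ← Submodule.smul_mem_iff _ ((Int.cast_ne_zero (α := ℚ)).2 hye),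
        hcomb]
      exact add_mem (Submodule.mem_sup_left (Submodule.subset_span
          ⟨_, ⟨_, hx.elim_insert hy, rfl⟩, rfl⟩))
        (Submodule.mem_sup_right (Submodule.smul_mem _ _ (Submodule.mem_span_singleton_self _)))
    rw [zrank_eq_finrank_cycleSpan, zrank_eq_finrank_cycleSpan]
    calc Module.finrank ℚ (cycleSpan th hd γ (insert e S))
        ≤ Module.finrank ℚ ↥(cycleSpan th hd γ S ⊔ ℚ ∙ q2 (rho γ y)) := Submodule.finrank_mono hle
      _ ≤ Module.finrank ℚ (cycleSpan th hd γ S) + Module.finrank ℚ ↥(ℚ ∙ q2 (rho γ y)) :=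
        Submodule.finrank_add_le_finrank_add_finrank _ _
      _ ≤ Module.finrank ℚ (cycleSpan th hd γ S) + 1 := by
        gcongr
        simpa using finrank_span_le_card (R := ℚ) ({q2 (rho γ y)} : Set (ℚ × ℚ))
  · push Not at hex
    rw [zrank_insert_of_forall_isCycle γ hex]
    omega

end Cycles

section Increment

variable {V E : Type} [Fintype V] [DecidableEq V] [Fintype E]

lemma fZ_eq (th hd : E → V) (γ : E → ℤ × ℤ) (S : Finset E) :
    fZ th hd γ S = Fintype.card V + zrank th hd γ S - numComponents th hd S := by
  have hcompl := Finset.card_add_card_compl (verts th hd S)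
  have hcomp := ncomp_add_card_compl_verts th hd S
  rw [fZ]
  omega

theorem fZ_insert_sub_eq_zero_or_one [DecidableEq E] (th hd : E → V) (γ : E → ℤ × ℤ)
    (S : Finset E) (e : E) :
    fZ th hd γ (insert e S) - fZ th hd γ S = 0 ∨ fZ th hd γ (insert e S) - fZ th hd γ S = 1 := by
  rw [fZ_eq, fZ_eq]
  by_cases h : Relation.EqvGen (adjS th hd S) (th e) (hd e)
  · have hc := numComponents_insert_of_eqvGen h
    have hr₁ := zrank_mono (th := th) (hd := hd) γ (Finset.subset_insert e S)
    have hr₂ := zrank_insert_le (th := th) (hd := hd) (S := S) γ e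
    omega
  · have hc := numComponents_insert_of_not_eqvGen h
    have hr := zrank_insert_of_not_eqvGen γ h
    omega

end Increment

theorem statement4_general (n : ℕ) (γ : KE n → ℤ × ℤ)
    (S : Finset (KE n)) (e : KE n) :
    fZ (Kt n) (Kh n) γ (insert e S) - fZ (Kt n) (Kh n) γ S = 0 ∨
    fZ (Kt n) (Kh n) γ (insert e S) - fZ (Kt n) (Kh n) γ S = 1 :=
  fZ_insert_sub_eq_zero_or_one (Kt n) (Kh n) γ S e

/-- On `K_n^{6,4}` with a ℤ²-coloring of rank `k`, adding a single edge to an edge-subset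
changes `f(G') = n' + rk_{ℤ²}(G') − c'` by exactly `0` or `1`. -/
theorem statement4 (n k : ℕ) (γ : KE n → ℤ × ℤ)
    (hk : zrank (Kt n) (Kh n) γ Finset.univ = k)
    (S : Finset (KE n)) (e : KE n) (he : e ∉ S) :
    fZ (Kt n) (Kh n) γ (insert e S) - fZ (Kt n) (Kh n) γ S = 0 ∨
    fZ (Kt n) (Kh n) γ (insert e S) - fZ (Kt n) (Kh n) γ S = 1 :=
  statement4_general n γ S e
end

section
/- Fix a Z²-coloring γ of K_n^{6,4} of Z²-rank 2. The family of colored-Laman graphs (spanning edge-sets with exactly 2n+1 edges such that every edge-induced subgraph with n' vertices, m' edges, c' components satisfies m' ≤ 2n' − 3 + 2·rk_{Z²} − 2(c'−1)), if nonempty, forms the set of bases of a matroid on the edge set of K_n^{6,4}. -/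
/-!
Pair the signed incidence vector of an edge with its color, `φ e ∈ ℚ^V × ℚ²`. The incidence
vectors of `S` have rank `n' − c'`, and the vectors of the span of `φ(S)` with zero vertex part
are exactly the rational span of the color sums of cycles of `S` (clear denominators), so
`f(S) = n' + rk_{ℤ²}(S) − c'` is the rank of `φ(S)`: monotone and submodular. The Laman count
reads `|S'| ≤ 2 f(S') − 1`, and for any monotone submodular `f` the sets obeying this count
satisfy the augmentation axiom (Edmonds' count-matroid argument via tight sets). Base exchange
is augmentation of `B₁ − e` from `B₂`.
-/

open Finset

/-- A colored-Laman graph on the ground set `K_n^{6,4}`: `2n+1` edges, and every nonempty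
edge-induced subgraph satisfies `m' ≤ 2n' − 3 + 2·rk_{ℤ²} − 2(c'−1)`. -/
def LamanB (n : ℕ) (γ : KE n → ℤ × ℤ) (S : Finset (KE n)) : Prop :=
  (S.card : ℤ) = 2 * n + 1 ∧
  ∀ S' ⊆ S, S'.Nonempty →
    (S'.card : ℤ) ≤ 2 * ((verts (Kt n) (Kh n) S').card : ℤ) - 3
      + 2 * (zrank (Kt n) (Kh n) γ S' : ℤ) - 2 * ((ncomp (Kt n) (Kh n) S' : ℤ) - 1)

section CountMatroid

variable {E : Type*}

def CountIndep (f : Finset E → ℤ) (I : Finset E) : Prop :=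
  ∀ S ⊆ I, S.Nonempty → (S.card : ℤ) ≤ 2 * f S - 1

def IsTight (f : Finset E → ℤ) (T : Finset E) : Prop :=
  T.Nonempty ∧ (T.card : ℤ) = 2 * f T - 1

lemma CountIndep.mono {f : Finset E → ℤ} {I J : Finset E} (hJ : CountIndep f J)
    (hIJ : I ⊆ J) : CountIndep f I :=
  fun S hS => hJ S (hS.trans hIJ)

variable [DecidableEq E]

def IsSubmodular (f : Finset E → ℤ) : Prop :=
  ∀ A B, f (A ∪ B) + f (A ∩ B) ≤ f A + f B

variable {f : Finset E → ℤ}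

namespace IsSubmodular

variable (hsub : IsSubmodular f) (hmono : Monotone f)
include hsub hmono

lemma insert_le_of_subset {T M : Finset E} {y : E} (hTM : T ⊆ M)
    (hy : f (insert y T) ≤ f T) : f (insert y M) ≤ f M := by
  have h := hsub M (insert y T)
  rw [union_insert, union_eq_left.mpr hTM] at h
  have : f T ≤ f (M ∩ insert y T) := hmono (subset_inter hTM (subset_insert y T))
  linarith

lemma union_le_of_forall_insert_le {M Z : Finset E} (hZ : ∀ y ∈ Z, f (insert y M) ≤ f M) :
    f (M ∪ Z) ≤ f M := by
  induction Z using Finset.induction_on with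
  | empty => simp
  | insert y Z _ ih =>
    rw [union_insert]
    calc f (insert y (M ∪ Z)) ≤ f (M ∪ Z) :=
          hsub.insert_le_of_subset hmono subset_union_left (hZ y (mem_insert_self y Z))
      _ ≤ f M := ih fun z hz => hZ z (mem_insert_of_mem hz)

end IsSubmodular

lemma IsTight.union (hsub : IsSubmodular f) {I T₁ T₂ : Finset E} (hI : CountIndep f I)
    (h₁ : IsTight f T₁) (h₂ : IsTight f T₂) (hT₁ : T₁ ⊆ I) (hT₂ : T₂ ⊆ I)
    (hinter : (T₁ ∩ T₂).Nonempty) : IsTight f (T₁ ∪ T₂) := by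
  have hcard : ((T₁ ∪ T₂).card : ℤ) + (T₁ ∩ T₂).card = T₁.card + T₂.card := by
    exact_mod_cast card_union_add_card_inter T₁ T₂
  have hunion_le := hI _ (union_subset hT₁ hT₂) (h₁.1.mono subset_union_left)
  have hinter_le := hI _ (inter_subset_left.trans hT₁) hinter
  have hsub₁₂ := hsub T₁ T₂
  exact ⟨h₁.1.mono subset_union_left, by linarith [h₁.2, h₂.2]⟩

lemma CountIndep.exists_isTight_of_not_insert (hmono : Monotone f) {I : Finset E} {x : E}
    (hI : CountIndep f I) (hx : CountIndep f {x}) (hdep : ¬ CountIndep f (insert x I)) :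
    ∃ T ⊆ I, IsTight f T ∧ f (insert x T) ≤ f T := by
  simp only [CountIndep, not_forall, not_le] at hdep
  obtain ⟨S, hSsub, hSne, hviol⟩ := hdep
  have hxS : x ∈ S := by
    by_contra hxS
    exact (hI S ((subset_insert_iff_of_notMem hxS).mp hSsub) hSne).not_gt hviol
  have hTI : S.erase x ⊆ I := subset_insert_iff.mp hSsub
  have hTne : (S.erase x).Nonempty := by
    by_contra hT
    rw [not_nonempty_iff_eq_empty, erase_eq_empty_iff] at hT
    obtain rfl : S = {x} := hT.resolve_left hSne.ne_empty
    exact (hx {x} subset_rfl hSne).not_gt hviol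
  have hcard : ((S.erase x).card : ℤ) = S.card - 1 := by
    rw [card_erase_of_mem hxS, Nat.cast_sub (card_pos.mpr hSne)]; rfl
  have hT := hI _ hTI hTne
  have hmonoT : f (S.erase x) ≤ f S := hmono (erase_subset x S)
  refine ⟨S.erase x, hTI, ⟨hTne, by omega⟩, ?_⟩
  rw [insert_erase hxS]
  omega

lemma CountIndep.exists_maximal_isTight_of_not_insert (hsub : IsSubmodular f)
    (hmono : Monotone f) {I : Finset E} {x : E} (hI : CountIndep f I) (hx : CountIndep f {x})
    (hdep : ¬ CountIndep f (insert x I)) :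
    ∃ M, Maximal (fun T => T ⊆ I ∧ IsTight f T) M ∧ f (insert x M) ≤ f M := by
  obtain ⟨T, hTI, hT, hxT⟩ := hI.exists_isTight_of_not_insert hmono hx hdep
  have hfin : {T | T ⊆ I ∧ IsTight f T}.Finite :=
    I.powerset.finite_toSet.subset fun T hT => mem_powerset.mpr hT.1
  obtain ⟨M, hTM, hM⟩ := hfin.exists_le_maximal (a := T) ⟨hTI, hT⟩
  exact ⟨M, hM, hsub.insert_le_of_subset hmono hTM hxT⟩

lemma CountIndep.disjoint_of_maximal_isTight (hsub : IsSubmodular f) {I M M' : Finset E}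
    (hI : CountIndep f I) (hM : Maximal (fun T => T ⊆ I ∧ IsTight f T) M)
    (hM' : Maximal (fun T => T ⊆ I ∧ IsTight f T) M') (hne : M ≠ M') : Disjoint M M' := by
  by_contra hnd
  have hU : M ∪ M' ⊆ I ∧ IsTight f (M ∪ M') :=
    ⟨union_subset hM.prop.1 hM'.prop.1, hM.prop.2.union hsub hI hM'.prop.2 hM.prop.1 hM'.prop.1
      (not_disjoint_iff_nonempty_inter.mp hnd)⟩
  exact hne ((hM.eq_of_le hU subset_union_left).trans (hM'.eq_of_le hU subset_union_right).symm)

lemma CountIndep.card_filter_insert_le_card (hsub : IsSubmodular f) (hmono : Monotone f)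
    {J M : Finset E} (hJ : CountIndep f J) (hM : IsTight f M) :
    (J.filter fun y => f (insert y M) ≤ f M).card ≤ M.card := by
  set Z := J.filter fun y => f (insert y M) ≤ f M
  rcases Z.eq_empty_or_nonempty with hZ | hZ
  · simp [hZ]
  have hfZ : f Z ≤ f M := (hmono subset_union_right).trans
    (hsub.union_le_of_forall_insert_le hmono fun y hy => (mem_filter.mp hy).2)
  have := hJ Z (filter_subset _ _) hZ
  have := hM.2
  omega

lemma card_le_card_of_subset_sdiff_union_biUnion {I₁ I₂ : Finset E} {𝓜 : Finset (Finset E)}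
    (Z : Finset E → Finset E) (h𝓜 : ∀ M ∈ 𝓜, M ⊆ I₁)
    (hdisj : ∀ M ∈ 𝓜, ∀ M' ∈ 𝓜, M ≠ M' → Disjoint M M')
    (hZ : ∀ M ∈ 𝓜, (Z M).card ≤ M.card)
    (hcover : I₂ ⊆ (I₁ \ 𝓜.biUnion id) ∪ 𝓜.biUnion Z) : I₂.card ≤ I₁.card :=
  calc I₂.card ≤ (I₁ \ 𝓜.biUnion id).card + (𝓜.biUnion Z).card :=
        (card_le_card hcover).trans (card_union_le _ _)
    _ ≤ (I₁ \ 𝓜.biUnion id).card + ∑ M ∈ 𝓜, M.card :=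
        Nat.add_le_add_left (card_biUnion_le.trans (sum_le_sum hZ)) _
    _ = (I₁ \ 𝓜.biUnion id).card + (𝓜.biUnion id).card :=
        congrArg _ (card_biUnion hdisj).symm
    _ = I₁.card := card_sdiff_add_card_eq_card (biUnion_subset.mpr h𝓜)

/-- Every `y ∈ I₂ \ I₁` is spanned by a maximal tight subset of `I₁`, distinct maximal tight
sets are disjoint, and each of them spans at most as many elements of `I₂` as it has. -/
theorem CountIndep.exists_insert (hsub : IsSubmodular f) (hmono : Monotone f)
    {I₁ I₂ : Finset E} (h₁ : CountIndep f I₁) (h₂ : CountIndep f I₂)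
    (hlt : I₁.card < I₂.card) :
    ∃ x ∈ I₂, x ∉ I₁ ∧ CountIndep f (insert x I₁) := by
  classical
  by_contra! hcon
  set 𝓜 := I₁.powerset.filter (Maximal fun T => T ⊆ I₁ ∧ IsTight f T)
  have mem_𝓜 {M} : M ∈ 𝓜 ↔ Maximal (fun T => T ⊆ I₁ ∧ IsTight f T) M :=
    ⟨fun h => (mem_filter.mp h).2, fun h => mem_filter.mpr ⟨mem_powerset.mpr h.prop.1, h⟩⟩
  set Z : Finset E → Finset E := fun M => I₂.filter fun y => f (insert y M) ≤ f M
  refine hlt.not_ge (card_le_card_of_subset_sdiff_union_biUnion Z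
    (fun M hM => (mem_𝓜.mp hM).prop.1)
    (fun M hM M' hM' => h₁.disjoint_of_maximal_isTight hsub (mem_𝓜.mp hM) (mem_𝓜.mp hM'))
    (fun M hM => h₂.card_filter_insert_le_card hsub hmono (mem_𝓜.mp hM).prop.2) ?_)
  intro y hy
  simp only [mem_union, mem_sdiff, mem_biUnion, id]
  by_cases hyI : y ∈ I₁
  · by_cases hyU : ∃ M ∈ 𝓜, y ∈ M
    · obtain ⟨M, hM, hyM⟩ := hyU
      exact Or.inr ⟨M, hM, mem_filter.mpr ⟨hy, by rw [insert_eq_of_mem hyM]⟩⟩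
    · exact Or.inl ⟨hyI, hyU⟩
  · obtain ⟨M, hM, hyM⟩ := h₁.exists_maximal_isTight_of_not_insert hsub hmono
      (h₂.mono (singleton_subset_iff.mpr hy)) (hcon y hy hyI)
    exact Or.inr ⟨M, mem_𝓜.mpr hM, mem_filter.mpr ⟨hy, hyM⟩⟩

end CountMatroid

section LinearAlgebra

open Module Submodule

variable {K M N ι : Type*} [DivisionRing K] [AddCommGroup M] [Module K M] [AddCommGroup N]
  [Module K N]

lemma monotone_finrank_span_image [FiniteDimensional K M] (v : ι → M) :
    Monotone fun S : Finset ι => (finrank K (span K (v '' S)) : ℤ) := fun _ _ h =>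
  Nat.cast_le.mpr (Submodule.finrank_mono (span_mono (Set.image_mono (coe_subset.mpr h))))

lemma isSubmodular_finrank_span_image [FiniteDimensional K M] [DecidableEq ι] (v : ι → M) :
    IsSubmodular fun S : Finset ι => (finrank K (span K (v '' S)) : ℤ) := fun A B => by
  have hsup : span K (v '' ↑(A ∪ B)) = span K (v '' A) ⊔ span K (v '' B) := by
    rw [coe_union, Set.image_union, span_union]
  have hinf : span K (v '' ↑(A ∩ B)) ≤ span K (v '' A) ⊓ span K (v '' B) :=
    le_inf (span_mono (Set.image_mono (by simp))) (span_mono (Set.image_mono (by simp)))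
  have := Submodule.finrank_sup_add_finrank_inf_eq (span K (v '' A)) (span K (v '' B))
  have := Submodule.finrank_mono hinf
  dsimp only
  rw [hsup]
  omega

lemma finrank_eq_finrank_map_fst_add_finrank_comap_inr [FiniteDimensional K M]
    [FiniteDimensional K N] (p : Submodule K (M × N)) :
    finrank K p = finrank K (p.map (LinearMap.fst K M N))
      + finrank K (p.comap (LinearMap.inr K M N)) := by
  let π := (LinearMap.fst K M N).domRestrict p
  let kerEquiv : LinearMap.ker π ≃ₗ[K] p.comap (LinearMap.inr K M N) :=
    { toFun := fun x => ⟨x.1.1.2, by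
        have hx : x.1.1.1 = 0 := x.2
        simp [← hx]⟩
      invFun := fun z => ⟨⟨(0, z), z.2⟩, rfl⟩
      map_add' := fun _ _ => rfl
      map_smul' := fun _ _ => rfl
      left_inv := fun x => by
        have hx : x.1.1.1 = 0 := x.2
        ext <;> simp [hx]
      right_inv := fun _ => rfl }
  rw [← LinearMap.finrank_range_add_finrank_ker π, LinearMap.range_domRestrict,
    kerEquiv.finrank_eq]

end LinearAlgebra

section Incidence

open Module Submodule Matrix

variable {V E : Type} [DecidableEq V] (th hd : E → V)

def incVec (e : E) : V → ℚ := fun v => incid th hd e v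

/-- Only the vertices spanned by `S` are kept as columns, so that the cocycles of this matrix
correspond to functions on the components counted by `ncomp`. -/
def incMatrix (S : Finset E) : Matrix S (verts th hd S) ℚ := fun e w => incid th hd e w

def componentSetoid (S : Finset E) : Setoid (verts th hd S) :=
  Relation.EqvGen.setoid fun a b => adjS th hd S a.1 b.1

variable {th hd}

lemma tail_mem_verts {S : Finset E} {e : E} (he : e ∈ S) : th e ∈ verts th hd S :=
  mem_union_left _ (mem_image_of_mem th he)

lemma head_mem_verts {S : Finset E} {e : E} (he : e ∈ S) : hd e ∈ verts th hd S :=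
  mem_union_right _ (mem_image_of_mem hd he)

lemma incMatrix_mulVec {S : Finset E} (g : verts th hd S → ℚ) (e : S) :
    (incMatrix th hd S *ᵥ g) e =
      g ⟨hd e, head_mem_verts e.2⟩ - g ⟨th e, tail_mem_verts e.2⟩ := by
  have hsum (a : V) (ha : a ∈ verts th hd S) :
      ∑ w : verts th hd S, (if a = w.1 then (1 : ℚ) else 0) * g w = g ⟨a, ha⟩ := by
    simp [← Subtype.ext_iff (a1 := ⟨a, ha⟩)]
  simp only [Matrix.mulVec, dotProduct, incMatrix, incid, Int.cast_sub, sub_mul, sum_sub_distrib]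
  push_cast
  rw [hsum, hsum]

lemma ker_incMatrix_mulVecLin (S : Finset E) :
    LinearMap.ker (incMatrix th hd S).mulVecLin =
      LinearMap.range (LinearMap.funLeft ℚ ℚ (Quotient.mk (componentSetoid th hd S))) := by
  ext g
  rw [LinearMap.mem_ker, LinearMap.mem_range, Matrix.mulVecLin_apply]
  constructor
  · intro hg
    have hedge : ∀ e (he : e ∈ S),
        g ⟨th e, tail_mem_verts he⟩ = g ⟨hd e, head_mem_verts he⟩ := fun e he => by
      have := congrFun hg ⟨e, he⟩
      rwa [incMatrix_mulVec, Pi.zero_apply, sub_eq_zero, eq_comm] at this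
    have hadj : ∀ a b : verts th hd S, adjS th hd S a.1 b.1 → g a = g b := by
      rintro ⟨a, ha⟩ ⟨b, hb⟩ ⟨e, he, ⟨rfl, rfl⟩ | ⟨rfl, rfl⟩⟩
      · exact hedge e he
      · exact (hedge e he).symm
    exact ⟨Quotient.lift g fun a b hab => Setoid.eqvGen_le (s := Setoid.ker g) hadj hab, rfl⟩
  · rintro ⟨h, rfl⟩
    funext e
    rw [incMatrix_mulVec, Pi.zero_apply, sub_eq_zero]
    exact congrArg h (Quotient.sound (Relation.EqvGen.rel _ _ ⟨e, e.2, Or.inr ⟨rfl, rfl⟩⟩))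

lemma finrank_ker_incMatrix_mulVecLin (S : Finset E) :
    finrank ℚ (LinearMap.ker (incMatrix th hd S).mulVecLin) = ncomp th hd S := by
  classical
  rw [ker_incMatrix_mulVecLin, LinearMap.finrank_range_of_inj
    (LinearMap.funLeft_injective_of_surjective _ _ _ Quotient.mk_surjective),
    Module.finrank_fintype_fun_eq_card, ncomp, Nat.card_eq_fintype_card]
  rfl

lemma incid_eq_zero_of_notMem_verts {S : Finset E} {e : E} {v : V} (he : e ∈ S)
    (hv : v ∉ verts th hd S) : incid th hd e v = 0 := by
  have hhd : hd e ≠ v := fun h => hv (h ▸ head_mem_verts he)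
  have hth : th e ≠ v := fun h => hv (h ▸ tail_mem_verts he)
  simp [incid, hhd, hth]

lemma finrank_span_incVec (S : Finset E) :
    finrank ℚ (span ℚ (incVec th hd '' S)) = (incMatrix th hd S).rank := by
  let ι := Function.ExtendByZero.linearMap ℚ (Subtype.val : verts th hd S → V)
  have hι : Function.Injective ι :=
    Function.extend_injective Subtype.val_injective (0 : V → ℚ)
  have hrow : ∀ e : S, ι ((incMatrix th hd S).row e) = incVec th hd e := fun e => by
    funext v
    by_cases hv : v ∈ verts th hd S
    · exact Subtype.val_injective.extend_apply _ (0 : V → ℚ) ⟨v, hv⟩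
    · rw [Function.ExtendByZero.linearMap_apply, Function.extend_apply' _ _ _
        fun ⟨w, hw⟩ => hv (hw ▸ w.2)]
      simp [incVec, incid_eq_zero_of_notMem_verts e.2 hv]
  have hspan :
      span ℚ (incVec th hd '' S) = (span ℚ (Set.range (incMatrix th hd S).row)).map ι := by
    rw [map_span, ← Set.range_comp, Set.image_eq_range]
    exact congrArg _ (congrArg Set.range (funext fun e => (hrow e).symm))
  rw [rank_eq_finrank_span_row, hspan]
  exact (equivMapOfInjective ι hι _).finrank_eq.symm

lemma finrank_span_incVec_add_ncomp (S : Finset E) :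
    finrank ℚ (span ℚ (incVec th hd '' S)) + ncomp th hd S = (verts th hd S).card := by
  rw [finrank_span_incVec, ← finrank_ker_incMatrix_mulVecLin, Matrix.rank,
    LinearMap.finrank_range_add_finrank_ker, Module.finrank_fintype_fun_eq_card, Fintype.card_coe]

end Incidence

lemma exists_intCast_eq_mul {ι : Type*} [Finite ι] (c : ι → ℚ) :
    ∃ N : ℤ, N ≠ 0 ∧ ∃ y : ι → ℤ, ∀ i, (y i : ℚ) = N * c i := by
  obtain ⟨b, hb⟩ := IsLocalization.exist_integer_multiples_of_finite (nonZeroDivisors ℤ) c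
  choose y hy using hb
  exact ⟨b, nonZeroDivisors.coe_ne_zero b, y, fun i => by simpa using hy i⟩

section Coloring

open Module Submodule

variable {V E : Type} [DecidableEq V] {th hd : E → V} {γ : E → ℤ × ℤ}

variable (th hd γ) in
def coloredIncVec (e : E) : (V → ℚ) × (ℚ × ℚ) := (incVec th hd e, q2 (γ e))

lemma map_fst_span_coloredIncVec (S : Finset E) :
    (span ℚ (coloredIncVec th hd γ '' S)).map (LinearMap.fst ℚ _ _) =
      span ℚ (incVec th hd '' S) := by
  rw [map_span, Set.image_image]
  rfl

variable [Fintype E]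

lemma sum_intCast_smul_coloredIncVec (x : E → ℤ) :
    ∑ e, (x e : ℚ) • coloredIncVec th hd γ e =
      (fun v => ((∑ e, x e * incid th hd e v : ℤ) : ℚ), q2 (rho γ x)) := by
  ext v <;> simp [coloredIncVec, incVec, rho, q2, Prod.fst_sum, Prod.snd_sum, Finset.sum_apply]

variable [DecidableEq E]

lemma comap_inr_span_coloredIncVec (S : Finset E) :
    (span ℚ (coloredIncVec th hd γ '' S)).comap (LinearMap.inr ℚ _ _) =
      span ℚ (q2 '' (rho γ '' {x | IsCycle th hd S x})) := by
  apply le_antisymm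
  · intro z hz
    obtain ⟨c, hc⟩ := (mem_span_image_finset_iff_exists_fun' ℚ).mp hz
    obtain ⟨N, hN, y, hy⟩ := exists_intCast_eq_mul c
    set x : E → ℤ := fun e => if e ∈ S then y e else 0
    have hx := sum_intCast_smul_coloredIncVec (th := th) (hd := hd) (γ := γ) x
    rw [show ∑ e, (x e : ℚ) • coloredIncVec th hd γ e = (N : ℚ) • (0, z) by
      simp [x, apply_ite (fun n : ℤ => (n : ℚ)), ite_smul, hy, ← smul_smul,
        ← Finset.smul_sum, hc]] at hx
    have hcyc : IsCycle th hd S x := ⟨fun e he => if_neg he, fun v => by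
      have : ((∑ e, x e * incid th hd e v : ℤ) : ℚ) = 0 := by
        simpa using (congrFun (congrArg Prod.fst hx) v).symm
      exact_mod_cast this⟩
    have hz : z = (N : ℚ)⁻¹ • q2 (rho γ x) := by
      have : q2 (rho γ x) = (N : ℚ) • z := by simpa using (congrArg Prod.snd hx).symm
      rw [this, smul_smul, inv_mul_cancel₀ (Int.cast_ne_zero.mpr hN), one_smul]
    rw [hz]
    exact smul_mem _ _ (subset_span ⟨rho γ x, ⟨x, hcyc, rfl⟩, rfl⟩)
  · rw [span_le]
    rintro _ ⟨_, ⟨x, hx, rfl⟩, rfl⟩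
    refine (mem_span_image_finset_iff_exists_fun' ℚ).mpr ⟨fun e => x e, ?_⟩
    rw [Finset.sum_subset (subset_univ S) fun e _ he => by simp [hx.1 e he],
      sum_intCast_smul_coloredIncVec]
    simp only [hx.2, Int.cast_zero]
    rfl

variable [Fintype V]

lemma finrank_span_coloredIncVec (S : Finset E) :
    finrank ℚ (span ℚ (coloredIncVec th hd γ '' S)) =
      finrank ℚ (span ℚ (incVec th hd '' S)) + zrank th hd γ S := by
  rw [finrank_eq_finrank_map_fst_add_finrank_comap_inr, map_fst_span_coloredIncVec,
    comap_inr_span_coloredIncVec]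
  rfl

lemma fZ_eq_finrank_span (S : Finset E) :
    fZ th hd γ S = finrank ℚ (span ℚ (coloredIncVec th hd γ '' S)) := by
  have := finrank_span_incVec_add_ncomp (th := th) (hd := hd) S
  rw [fZ, finrank_span_coloredIncVec]
  omega

lemma monotone_fZ : Monotone (fZ th hd γ) := by
  rw [show fZ th hd γ = _ from funext fZ_eq_finrank_span]
  exact monotone_finrank_span_image (coloredIncVec th hd γ)

lemma isSubmodular_fZ : IsSubmodular (fZ th hd γ) := by
  rw [show fZ th hd γ = _ from funext fZ_eq_finrank_span]
  exact isSubmodular_finrank_span_image (coloredIncVec th hd γ)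

end Coloring

lemma lamanB_iff {n : ℕ} {γ : KE n → ℤ × ℤ} {S : Finset (KE n)} :
    LamanB n γ S ↔ (S.card : ℤ) = 2 * n + 1 ∧ CountIndep (fZ (Kt n) (Kh n) γ) S := by
  have hbound : ∀ S' : Finset (KE n), 2 * ((verts (Kt n) (Kh n) S').card : ℤ) - 3
      + 2 * (zrank (Kt n) (Kh n) γ S' : ℤ) - 2 * ((ncomp (Kt n) (Kh n) S' : ℤ) - 1)
      = 2 * fZ (Kt n) (Kh n) γ S' - 1 := fun S' => by rw [fZ]; ring
  simp only [LamanB, CountIndep, hbound]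

theorem statement11_general (n : ℕ) (γ : KE n → ℤ × ℤ) :
    ∀ B₁ B₂ : Finset (KE n), LamanB n γ B₁ → LamanB n γ B₂ →
      ∀ e ∈ B₁, e ∉ B₂ →
        ∃ e' ∈ B₂, e' ∉ B₁ ∧ LamanB n γ (insert e' (B₁.erase e)) := by
  intro B₁ B₂ hB₁ hB₂ e he heB₂
  rw [lamanB_iff] at hB₁ hB₂
  have hlt : (B₁.erase e).card < B₂.card := by
    rw [card_erase_of_mem he]
    omega
  obtain ⟨x, hxB₂, hxI, hind⟩ :=
    (hB₁.2.mono (erase_subset e B₁)).exists_insert isSubmodular_fZ monotone_fZ hB₂.2 hlt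
  have hxe : x ≠ e := fun h => heB₂ (h ▸ hxB₂)
  refine ⟨x, hxB₂, fun hx => hxI (mem_erase.mpr ⟨hxe, hx⟩), lamanB_iff.mpr ⟨?_, hind⟩⟩
  rw [card_insert_of_notMem hxI, card_erase_of_mem he]
  omega

/-- For a coloring of `K_n^{6,4}` of ℤ²-rank 2, the family of colored-Laman graphs, if
nonempty, forms the set of bases of a matroid (all have cardinality `2n+1` by definition,
and the base-exchange property holds). -/
theorem statement11 (n : ℕ) (γ : KE n → ℤ × ℤ)
    (h2 : zrank (Kt n) (Kh n) γ Finset.univ = 2)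
    (hne : ∃ S, LamanB n γ S) :
    ∀ B₁ B₂ : Finset (KE n), LamanB n γ B₁ → LamanB n γ B₂ →
      ∀ e ∈ B₁, e ∉ B₂ →
        ∃ e' ∈ B₂, e' ∉ B₁ ∧ LamanB n γ (insert e' (B₁.erase e)) :=
  statement11_general n γ
end
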